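/- For every λ ∈ [0,1], the sensitivity of the regularized survey-weighted mean equals G_λ(U_W)·U_Y/N, where G_λ(U_W) = (1−λ)·U_W + λ·N/n: for any two adjacent samples (y,w) and (y′,w′) with entries satisfying 0 ≤ y_i, y_i′ ≤ U_Y and 0 ≤ w_i, w_i′ ≤ U_W, one has |θ̂(y, G_λ(w)) − θ̂(y′, G_λ(w′))| ≤ G_λ(U_W)·U_Y/N, and this bound is attained by some adjacent pair. -/

import Mathlib

open Finset

/-- The survey-weighted mean `θ̂(y,w) = (1/N)·Σᵢ yᵢ wᵢ`. -/
noncomputable def weightedMean (N n : ℕ) (y w : Fin n → ℝ) : ℝ :=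
  (1 / (N : ℝ)) * ∑ i, y i * w i

/-- The regularized weights `G_λ(w)ᵢ = (1−λ)·wᵢ + λ·N/n`. -/
noncomputable def regWeights (N n : ℕ) (lam : ℝ) (w : Fin n → ℝ) : Fin n → ℝ :=
  fun i => (1 - lam) * w i + lam * (N : ℝ) / (n : ℝ)

/-- `G_λ` applied to a scalar: `G_λ(c) = (1−λ)·c + λ·N/n`. -/
noncomputable def regScalar (N n : ℕ) (lam c : ℝ) : ℝ :=
  (1 - lam) * c + lam * (N : ℝ) / (n : ℝ)

/-- Two samples `(y,w)` and `(y',w')` are adjacent if they agree on all but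
(at most) one index. -/
def Adjacent {n : ℕ} (y w y' w' : Fin n → ℝ) : Prop :=
  ∃ i : Fin n, ∀ j : Fin n, j ≠ i → y j = y' j ∧ w j = w' j

/-! For `λ ∈ [0,1]` the map `G_λ` is monotone and nonnegative on `[0, U_W]`, so each term
`yᵢ·G_λ(w)ᵢ` lies in `[0, G_λ(U_W)·U_Y]`. Adjacent samples differ in a single term, which bounds
the difference of the means by `G_λ(U_W)·U_Y/N`; putting `y = U_Y·eᵢ` against `y' = 0` with all
weights `U_W` attains the bound. -/

section Sensitivity

variable {N n : ℕ} {lam : ℝ}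

theorem regWeights_apply (w : Fin n → ℝ) (i : Fin n) :
    regWeights N n lam w i = regScalar N n lam (w i) :=
  rfl

variable (N n) in
theorem regScalar_nonneg (hlam0 : 0 ≤ lam) (hlam1 : lam ≤ 1) {c : ℝ} (hc : 0 ≤ c) :
    0 ≤ regScalar N n lam c := by
  unfold regScalar
  have : 0 ≤ 1 - lam := by linarith
  positivity

theorem regScalar_le_regScalar (hlam1 : lam ≤ 1) {c d : ℝ} (hcd : c ≤ d) :
    regScalar N n lam c ≤ regScalar N n lam d := by
  unfold regScalar
  gcongr

theorem regWeights_mem_Icc (hlam0 : 0 ≤ lam) (hlam1 : lam ≤ 1) {W : ℝ} {w : Fin n → ℝ}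
    (hw : ∀ i, 0 ≤ w i ∧ w i ≤ W) (i : Fin n) :
    0 ≤ regWeights N n lam w i ∧ regWeights N n lam w i ≤ regScalar N n lam W :=
  ⟨regScalar_nonneg N n hlam0 hlam1 (hw i).1, regScalar_le_regScalar hlam1 (hw i).2⟩

theorem Adjacent.regWeights {y w y' w' : Fin n → ℝ} (h : Adjacent y w y' w') :
    Adjacent y (regWeights N n lam w) y' (regWeights N n lam w') := by
  obtain ⟨i, hi⟩ := h
  refine ⟨i, fun j hj => ⟨(hi j hj).1, ?_⟩⟩
  simp only [regWeights_apply, (hi j hj).2]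

theorem Adjacent.weightedMean_sub {y w y' w' : Fin n → ℝ} (h : Adjacent y w y' w') :
    ∃ i, weightedMean N n y w - weightedMean N n y' w' = (y i * w i - y' i * w' i) / N := by
  obtain ⟨i, hi⟩ := h
  refine ⟨i, ?_⟩
  have hsum : ∑ j, (y j * w j - y' j * w' j) = y i * w i - y' i * w' i :=
    Fintype.sum_eq_single i fun j hj => by rw [(hi j hj).1, (hi j hj).2, sub_self]
  rw [weightedMean, weightedMean, ← mul_sub, ← Finset.sum_sub_distrib, hsum]
  ring

theorem abs_mul_sub_mul_le {a b a' b' A B : ℝ} (ha : 0 ≤ a ∧ a ≤ A) (hb : 0 ≤ b ∧ b ≤ B)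
    (ha' : 0 ≤ a' ∧ a' ≤ A) (hb' : 0 ≤ b' ∧ b' ≤ B) : |a * b - a' * b'| ≤ A * B :=
  abs_sub_le_of_nonneg_of_le (mul_nonneg ha.1 hb.1)
    (mul_le_mul ha.2 hb.2 hb.1 (ha.1.trans ha.2)) (mul_nonneg ha'.1 hb'.1)
    (mul_le_mul ha'.2 hb'.2 hb'.1 (ha'.1.trans ha'.2))

theorem abs_weightedMean_sub_le {UY W : ℝ} {y w y' w' : Fin n → ℝ}
    (hadj : Adjacent y w y' w') (hy : ∀ i, 0 ≤ y i ∧ y i ≤ UY) (hy' : ∀ i, 0 ≤ y' i ∧ y' i ≤ UY)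
    (hw : ∀ i, 0 ≤ w i ∧ w i ≤ W) (hw' : ∀ i, 0 ≤ w' i ∧ w' i ≤ W) :
    |weightedMean N n y w - weightedMean N n y' w'| ≤ W * UY / N := by
  obtain ⟨i, hi⟩ := hadj.weightedMean_sub (N := N)
  rw [hi, abs_div, Nat.abs_cast, mul_comm W]
  gcongr
  exact abs_mul_sub_mul_le (hy i) (hw i) (hy' i) (hw' i)

theorem adjacent_single_zero (i : Fin n) (a : ℝ) (w : Fin n → ℝ) :
    Adjacent (Pi.single i a) w 0 w :=
  ⟨i, fun _ hj => ⟨Pi.single_eq_of_ne hj _, rfl⟩⟩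

theorem single_mem_Icc (i : Fin n) {a : ℝ} (ha : 0 ≤ a) (j : Fin n) :
    0 ≤ Pi.single (M := fun _ => ℝ) i a j ∧ Pi.single (M := fun _ => ℝ) i a j ≤ a := by
  rcases eq_or_ne j i with rfl | hj
  · simp [ha]
  · simp [Pi.single_eq_of_ne hj, ha]

theorem weightedMean_single (i : Fin n) (a : ℝ) (w : Fin n → ℝ) :
    weightedMean N n (Pi.single i a) w = a * w i / N := by
  rw [weightedMean, Fintype.sum_eq_single i fun j hj => by simp [Pi.single_eq_of_ne hj]]
  simp only [Pi.single_eq_same]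
  ring

theorem weightedMean_zero_left (w : Fin n → ℝ) : weightedMean N n 0 w = 0 := by
  simp [weightedMean]

end Sensitivity

theorem regularized_mean_sensitivity_general
    (N n : ℕ) (hn : 1 ≤ n) (UY UW : ℝ) (hUY : 0 < UY) (hUW : 0 < UW)
    (lam : ℝ) (hlam : lam ∈ Set.Icc (0 : ℝ) 1) :
    (∀ y w y' w' : Fin n → ℝ, Adjacent y w y' w' →
      (∀ i, 0 ≤ y i ∧ y i ≤ UY) → (∀ i, 0 ≤ y' i ∧ y' i ≤ UY) →
      (∀ i, 0 ≤ w i ∧ w i ≤ UW) → (∀ i, 0 ≤ w' i ∧ w' i ≤ UW) →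
      |weightedMean N n y (regWeights N n lam w) -
        weightedMean N n y' (regWeights N n lam w')| ≤ regScalar N n lam UW * UY / N) ∧
    (∃ y w y' w' : Fin n → ℝ, Adjacent y w y' w' ∧
      (∀ i, 0 ≤ y i ∧ y i ≤ UY) ∧ (∀ i, 0 ≤ y' i ∧ y' i ≤ UY) ∧
      (∀ i, 0 ≤ w i ∧ w i ≤ UW) ∧ (∀ i, 0 ≤ w' i ∧ w' i ≤ UW) ∧
      |weightedMean N n y (regWeights N n lam w) -
        weightedMean N n y' (regWeights N n lam w')| = regScalar N n lam UW * UY / N) := by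
  obtain ⟨hlam0, hlam1⟩ := hlam
  refine ⟨fun y w y' w' hadj hy hy' hw hw' =>
    abs_weightedMean_sub_le hadj.regWeights hy hy'
      (regWeights_mem_Icc hlam0 hlam1 hw) (regWeights_mem_Icc hlam0 hlam1 hw'), ?_⟩
  set i : Fin n := ⟨0, hn⟩
  refine ⟨Pi.single i UY, fun _ => UW, 0, fun _ => UW, adjacent_single_zero i UY _,
    single_mem_Icc i hUY.le, fun _ => ⟨le_rfl, hUY.le⟩, fun _ => ⟨hUW.le, le_rfl⟩,
    fun _ => ⟨hUW.le, le_rfl⟩, ?_⟩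
  have hG := regScalar_nonneg N n hlam0 hlam1 hUW.le
  rw [weightedMean_single, weightedMean_zero_left, sub_zero, regWeights_apply,
    abs_of_nonneg (by positivity)]
  ring

/-- for every `λ ∈ [0,1]`, the sensitivity of the regularized
survey-weighted mean equals `G_λ(U_W)·U_Y/N`: the bound holds for all adjacent
bounded samples, and it is attained. -/
theorem regularized_mean_sensitivity
    (N n : ℕ) (hn : 1 ≤ n) (hnN : n ≤ N) (UY UW : ℝ) (hUY : 0 < UY) (hUW : 0 < UW)
    (lam : ℝ) (hlam : lam ∈ Set.Icc (0 : ℝ) 1) :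
    (∀ y w y' w' : Fin n → ℝ, Adjacent y w y' w' →
      (∀ i, 0 ≤ y i ∧ y i ≤ UY) → (∀ i, 0 ≤ y' i ∧ y' i ≤ UY) →
      (∀ i, 0 ≤ w i ∧ w i ≤ UW) → (∀ i, 0 ≤ w' i ∧ w' i ≤ UW) →
      |weightedMean N n y (regWeights N n lam w) -
        weightedMean N n y' (regWeights N n lam w')| ≤ regScalar N n lam UW * UY / N) ∧
    (∃ y w y' w' : Fin n → ℝ, Adjacent y w y' w' ∧
      (∀ i, 0 ≤ y i ∧ y i ≤ UY) ∧ (∀ i, 0 ≤ y' i ∧ y' i ≤ UY) ∧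
      (∀ i, 0 ≤ w i ∧ w i ≤ UW) ∧ (∀ i, 0 ≤ w' i ∧ w' i ≤ UW) ∧
      |weightedMean N n y (regWeights N n lam w) -
        weightedMean N n y' (regWeights N n lam w')| = regScalar N n lam UW * UY / N) :=
  regularized_mean_sensitivity_general N n hn UY UW hUY hUW lam hlam
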